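/- Let L be a positive semi-definite linear functional on the algebra R generated by the fractional polynomials Qₙ (rational nonnegative exponents, n variables on [0,∞)ⁿ) and the function θ(t) = (1 + Σⱼ tⱼ² + Σₖ pₖ(t)²)^{-1}, where p₁, …, p_m ∈ Qₙ are real. Suppose μ is a positive Borel measure on [0,∞)ⁿ representing L, i.e., L(r) = ∫ r dμ for all r ∈ R. If in addition L(pₖ·|r|²) ≥ 0 for all r ∈ R and all k, and μ is obtained from the spectral measure construction so that each multiplication operator by pₖ has positive closure, then the support of μ is contained in ⋂ₖ pₖ^{-1}([0,∞)). Conversely, if supp μ ⊆ ⋂ₖ pₖ^{-1}([0,∞)), then L(pₖ·|r|²) ≥ 0 for all r ∈ R and all k. -/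

import Mathlib

open MeasureTheory
open scoped ComplexOrder

/-- Points of `[0,∞)ⁿ`. -/
abbrev NNVec (n : ℕ) := {t : Fin n → ℝ // ∀ j, 0 ≤ t j}

/-- The real fractional monomial `t ↦ t^α = t₁^{α₁} ⋯ tₙ^{αₙ}` on `[0,∞)ⁿ`
(real powers; the convention `0^0 = 1` is in force). -/
noncomputable def fracMonoR {n : ℕ} (α : Fin n → ℚ) (t : NNVec n) : ℝ :=
  ∏ j, (t.1 j) ^ ((α j : ℝ))

/-- The fractional monomial `t ↦ t^α`, regarded as a complex-valued function. -/
noncomputable def fracMono {n : ℕ} (α : Fin n → ℚ) (t : NNVec n) : ℂ :=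
  ((fracMonoR α t : ℝ) : ℂ)

/-- The set of fractional monomials with nonnegative rational exponents. -/
def fracMonoSet (n : ℕ) : Set (NNVec n → ℂ) :=
  {f | ∃ α : Fin n → ℚ, (∀ j, 0 ≤ α j) ∧ f = fracMono α}

/-- `Qₙ`: the complex algebra of "fractional polynomials" on `[0,∞)ⁿ`, i.e. the algebra
generated by the fractional monomials `t^α`, `α ∈ (ℚ₊)ⁿ`. -/
noncomputable def QAlg (n : ℕ) : Subalgebra ℂ (NNVec n → ℂ) :=
  Algebra.adjoin ℂ (fracMonoSet n)

/-- A real-valued function on `[0,∞)ⁿ` is a *real fractional polynomial* if, viewed as a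
complex-valued function, it belongs to `Qₙ`. -/
def IsRealFracPoly {n : ℕ} (p : NNVec n → ℝ) : Prop :=
  (fun t => ((p t : ℝ) : ℂ)) ∈ QAlg n

/-- `θ_p(t) = (1 + t₁² + ⋯ + tₙ² + p₁(t)² + ⋯ + p_m(t)²)⁻¹`. -/
noncomputable def thetaFn {n m : ℕ} (p : Fin m → (NNVec n → ℝ)) (t : NNVec n) : ℝ :=
  (1 + ∑ j, (t.1 j) ^ 2 + ∑ k, (p k t) ^ 2)⁻¹

/-- `R`: the complex algebra generated by `Qₙ` together with the function `θ_p`. -/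
noncomputable def RAlg (n m : ℕ) (p : Fin m → (NNVec n → ℝ)) : Subalgebra ℂ (NNVec n → ℂ) :=
  Algebra.adjoin ℂ (fracMonoSet n ∪ {fun t => ((thetaFn p t : ℝ) : ℂ)})

/-!
Write `h = pₖ θ`; then `h ≤ 1/2`, and `r = (1/2 - h)ʲ θ ∈ R` turns `L(pₖ |r|²) ≥ 0` into
`∫ h (1/2 - h)²ʲ θ dμ ≥ 0` for every `j`. On `{h ≤ -ε}` the integrand is at most
`-ε (1/2 + ε)²ʲ θ`, elsewhere at most `(1/2)²ʲ⁺¹ θ`, so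
`ε (1/2 + ε)²ʲ ∫_{h ≤ -ε} θ dμ ≤ (1/2)²ʲ⁺¹ ∫ θ dμ` for all `j`. Letting `j → ∞` gives
`∫_{h ≤ -ε} θ dμ = 0`, and since `θ > 0` the set `{pₖ < 0} = ⋃_ε {h ≤ -ε}` is `μ`-null.
The converse is the positivity of `∫ pₖ |r|² dμ` when `pₖ ≥ 0` almost everywhere.
-/

lemma mul_sq_pow_le {a c : ℝ} (hc : 0 ≤ c) (ha : a ≤ c) (j : ℕ) :
    a * ((c - a) ^ 2) ^ j ≤ c * (c ^ 2) ^ j := by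
  rcases le_or_gt a 0 with ha0 | ha0
  · exact (mul_nonpos_of_nonpos_of_nonneg ha0 (by positivity)).trans (by positivity)
  · have hsq : (c - a) ^ 2 ≤ c ^ 2 := pow_le_pow_left₀ (by linarith) (by linarith) 2
    exact mul_le_mul ha (pow_le_pow_left₀ (by positivity) hsq j) (by positivity) hc

lemma mul_sq_pow_le_neg {a c ε : ℝ} (hc : 0 ≤ c) (hε : 0 ≤ ε) (ha : a ≤ -ε) (j : ℕ) :
    a * ((c - a) ^ 2) ^ j ≤ -(ε * ((c + ε) ^ 2) ^ j) := by
  have hsq : (c + ε) ^ 2 ≤ (c - a) ^ 2 := pow_le_pow_left₀ (by linarith) (by linarith) 2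
  have hpow : ((c + ε) ^ 2) ^ j ≤ ((c - a) ^ 2) ^ j := pow_le_pow_left₀ (by positivity) hsq j
  nlinarith [pow_nonneg (sq_nonneg (c + ε)) j]

lemma nonpos_of_forall_pow_mul_le {x y c d : ℝ} (hc : 0 ≤ c) (hcd : c < d)
    (h : ∀ j : ℕ, d ^ j * x ≤ c ^ j * y) : x ≤ 0 := by
  have hd : 0 < d := hc.trans_lt hcd
  have hlim : Filter.Tendsto (fun j : ℕ => (c / d) ^ j * y) Filter.atTop (nhds 0) := by
    simpa using (tendsto_pow_atTop_nhds_zero_of_lt_one (by positivity)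
      ((div_lt_one hd).2 hcd)).mul_const y
  refine ge_of_tendsto' hlim fun j => ?_
  rw [div_pow, div_mul_eq_mul_div, le_div_iff₀ (pow_pos hd j), mul_comm]
  exact h j

section WeightedMoments

variable {X : Type*} [MeasurableSpace X] {μ : Measure X} {h w : X → ℝ} {c : ℝ}

lemma pow_mul_setIntegral_le (hh : Measurable h) (hc : 0 ≤ c) (hhc : ∀ x, h x ≤ c)
    (hw : Integrable w μ) (hw_nonneg : ∀ x, 0 ≤ w x)
    (hint : ∀ j : ℕ, Integrable (fun x => h x * ((c - h x) ^ 2) ^ j * w x) μ)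
    (H : ∀ j : ℕ, 0 ≤ ∫ x, h x * ((c - h x) ^ 2) ^ j * w x ∂μ) {ε : ℝ} (hε : 0 ≤ ε) (j : ℕ) :
    ((c + ε) ^ 2) ^ j * (ε * ∫ x in {x | h x ≤ -ε}, w x ∂μ) ≤
      (c ^ 2) ^ j * (c * ∫ x, w x ∂μ) := by
  set A := {x | h x ≤ -ε}
  have hA : MeasurableSet A := measurableSet_le hh measurable_const
  have hbound : ∀ x, h x * ((c - h x) ^ 2) ^ j * w x ≤
      c * (c ^ 2) ^ j * w x - ε * ((c + ε) ^ 2) ^ j * A.indicator w x := by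
    intro x
    by_cases hx : x ∈ A
    · rw [Set.indicator_of_mem hx, ← sub_mul]
      refine mul_le_mul_of_nonneg_right ?_ (hw_nonneg x)
      linarith [mul_sq_pow_le_neg hc hε hx j, mul_nonneg hc (pow_nonneg (sq_nonneg c) j)]
    · rw [Set.indicator_of_notMem hx, mul_zero, sub_zero]
      exact mul_le_mul_of_nonneg_right (mul_sq_pow_le hc (hhc x) j) (hw_nonneg x)
  have hmono : ∫ x, h x * ((c - h x) ^ 2) ^ j * w x ∂μ ≤
      ∫ x, (c * (c ^ 2) ^ j * w x - ε * ((c + ε) ^ 2) ^ j * A.indicator w x) ∂μ :=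
    integral_mono (hint j) ((hw.const_mul _).sub ((hw.indicator hA).const_mul _)) hbound
  rw [integral_sub (hw.const_mul _) ((hw.indicator hA).const_mul _), integral_const_mul,
    integral_const_mul, integral_indicator hA] at hmono
  linarith [H j]

lemma measure_setOf_le_neg_eq_zero (hh : Measurable h) (hc : 0 ≤ c) (hhc : ∀ x, h x ≤ c)
    (hw : Integrable w μ) (hw_pos : ∀ x, 0 < w x)
    (hint : ∀ j : ℕ, Integrable (fun x => h x * ((c - h x) ^ 2) ^ j * w x) μ)
    (H : ∀ j : ℕ, 0 ≤ ∫ x, h x * ((c - h x) ^ 2) ^ j * w x ∂μ) {ε : ℝ} (hε : 0 < ε) :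
    μ {x | h x ≤ -ε} = 0 := by
  have hle := nonpos_of_forall_pow_mul_le (sq_nonneg c) (by nlinarith)
    (pow_mul_setIntegral_le hh hc hhc hw (fun x => (hw_pos x).le) hint H hε.le)
  have hnot : ¬ 0 < ∫ x in {x | h x ≤ -ε}, w x ∂μ := fun hpos => by nlinarith
  rwa [setIntegral_pos_iff_support_of_nonneg_ae (ae_of_all _ fun x => (hw_pos x).le)
    hw.integrableOn, Function.support_eq_univ (fun x => (hw_pos x).ne'), Set.univ_inter,
    pos_iff_ne_zero, not_not] at hnot

theorem measure_setOf_neg_eq_zero_of_integral_nonneg (hh : Measurable h) (hc : 0 ≤ c)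
    (hhc : ∀ x, h x ≤ c) (hw : Integrable w μ) (hw_pos : ∀ x, 0 < w x)
    (hint : ∀ j : ℕ, Integrable (fun x => h x * ((c - h x) ^ 2) ^ j * w x) μ)
    (H : ∀ j : ℕ, 0 ≤ ∫ x, h x * ((c - h x) ^ 2) ^ j * w x ∂μ) :
    μ {x | h x < 0} = 0 := by
  have hsub : {x | h x < 0} ⊆ ⋃ i : ℕ, {x | h x ≤ -(1 / (i + 1))} := by
    intro x hx
    obtain ⟨i, hi⟩ := exists_nat_one_div_lt (neg_pos.2 (show h x < 0 from hx))
    exact Set.mem_iUnion.2 ⟨i, show h x ≤ -(1 / (i + 1)) by linarith⟩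
  exact measure_mono_null hsub (measure_iUnion_null fun i =>
    measure_setOf_le_neg_eq_zero hh hc hhc hw hw_pos hint H (by positivity))

end WeightedMoments

lemma star_mem_adjoin_of_forall_isSelfAdjoint {R A : Type*} [CommSemiring R] [StarRing R]
    [Semiring A] [StarRing A] [Algebra R A] [StarModule R A] {s : Set A}
    (hs : ∀ a ∈ s, IsSelfAdjoint a) {x : A} (hx : x ∈ Algebra.adjoin R s) :
    star x ∈ Algebra.adjoin R s := by
  have hstar : star s = s := by
    ext a
    rw [Set.mem_star]
    refine ⟨fun ha => ?_, fun ha => (hs a ha).star_eq.symm ▸ ha⟩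
    rwa [← star_star a, (hs _ ha).star_eq]
  rwa [← Subalgebra.mem_star_iff, Subalgebra.star_adjoin_comm, hstar]

lemma isSelfAdjoint_ofReal_comp {X : Type*} (g : X → ℝ) : IsSelfAdjoint (fun x => (g x : ℂ)) :=
  funext fun x => Complex.conj_ofReal (g x)

lemma ofReal_comp_mul_mul_star {X : Type*} (g : X → ℝ) (r : X → ℂ) :
    (fun x => (g x : ℂ)) * r * star r = fun x => ((g x * Complex.normSq (r x) : ℝ) : ℂ) := by
  funext x
  simp only [Pi.mul_apply, Pi.star_apply, Complex.star_def, mul_assoc, Complex.mul_conj,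
    Complex.ofReal_mul]

lemma continuous_of_mem_QAlg {n : ℕ} {f : NNVec n → ℂ} (hf : f ∈ QAlg n) : Continuous f := by
  induction hf using Algebra.adjoin_induction with
  | mem x hx =>
    obtain ⟨α, hα, rfl⟩ := hx
    refine Complex.continuous_ofReal.comp (continuous_finsetProd _ fun j _ => ?_)
    exact (Real.continuous_rpow_const (by exact_mod_cast hα j)).comp
      ((continuous_apply j).comp continuous_subtype_val)
  | algebraMap r => exact continuous_const
  | add x y _ _ hx hy => exact hx.add hy
  | mul x y _ _ hx hy => exact hx.mul hy

lemma IsRealFracPoly.continuous {n : ℕ} {q : NNVec n → ℝ} (hq : IsRealFracPoly q) :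
    Continuous q := by
  simpa [Function.comp_def] using Complex.continuous_re.comp (continuous_of_mem_QAlg hq)

section Theta

variable {n m : ℕ} {p : Fin m → NNVec n → ℝ}

lemma thetaFn_pos (t : NNVec n) : 0 < thetaFn p t := by
  unfold thetaFn
  positivity

lemma mul_thetaFn_le_half (k : Fin m) (t : NNVec n) : p k t * thetaFn p t ≤ 1 / 2 := by
  have hsum : (p k t) ^ 2 ≤ ∑ l, (p l t) ^ 2 :=
    Finset.single_le_sum (fun l _ => sq_nonneg (p l t)) (Finset.mem_univ k)
  have hS : 1 + (p k t) ^ 2 ≤ 1 + ∑ j, (t.1 j) ^ 2 + ∑ l, (p l t) ^ 2 := by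
    linarith [Finset.sum_nonneg fun j (_ : j ∈ Finset.univ) => sq_nonneg (t.1 j)]
  rw [thetaFn, ← div_eq_mul_inv, div_le_iff₀ (by positivity)]
  nlinarith [sq_nonneg (p k t - 1)]

lemma measurable_thetaFn (hp : ∀ k, Measurable (p k)) : Measurable (thetaFn p) := by
  have hcoord (j : Fin n) : Measurable fun t : NNVec n => t.1 j :=
    (measurable_pi_apply j).comp measurable_subtype_coe
  exact ((measurable_const.add (Finset.measurable_sum _ fun j _ => (hcoord j).pow_const 2)).add
    (Finset.measurable_sum _ fun k _ => (hp k).pow_const 2)).inv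

lemma isSelfAdjoint_of_mem_RAlg_generators {f : NNVec n → ℂ}
    (hf : f ∈ fracMonoSet n ∪ {fun t => ((thetaFn p t : ℝ) : ℂ)}) : IsSelfAdjoint f := by
  rcases hf with ⟨α, -, rfl⟩ | rfl
  · exact isSelfAdjoint_ofReal_comp (fracMonoR α)
  · exact isSelfAdjoint_ofReal_comp (thetaFn p)

lemma star_mem_RAlg {f : NNVec n → ℂ} (hf : f ∈ RAlg n m p) : star f ∈ RAlg n m p :=
  star_mem_adjoin_of_forall_isSelfAdjoint (fun _ => isSelfAdjoint_of_mem_RAlg_generators) hf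

lemma ofReal_thetaFn_mem_RAlg : (fun t => ((thetaFn p t : ℝ) : ℂ)) ∈ RAlg n m p :=
  Algebra.subset_adjoin (Set.mem_union_right _ rfl)

lemma ofReal_mem_RAlg {q : NNVec n → ℝ} (hq : IsRealFracPoly q) :
    (fun t => ((q t : ℝ) : ℂ)) ∈ RAlg n m p :=
  Algebra.adjoin_mono Set.subset_union_left hq

lemma exists_mem_RAlg_mul_mul_star_eq (hp : ∀ k, IsRealFracPoly (p k)) (k : Fin m) (j : ℕ) :
    ∃ r ∈ RAlg n m p, (fun t => ((p k t : ℝ) : ℂ)) * r * star r =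
      fun t => ((p k t * thetaFn p t * ((1 / 2 - p k t * thetaFn p t) ^ 2) ^ j * thetaFn p t
        : ℝ) : ℂ) := by
  refine ⟨(algebraMap ℂ _ (1 / 2) - (fun t => ((p k t : ℝ) : ℂ)) *
      fun t => ((thetaFn p t : ℝ) : ℂ)) ^ j * fun t => ((thetaFn p t : ℝ) : ℂ), ?_, ?_⟩
  · exact mul_mem (pow_mem (sub_mem (Subalgebra.algebraMap_mem _ _)
      (mul_mem (ofReal_mem_RAlg (hp k)) ofReal_thetaFn_mem_RAlg)) j) ofReal_thetaFn_mem_RAlg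
  · funext t
    simp only [Pi.mul_apply, Pi.pow_apply, Pi.sub_apply, Pi.star_apply, Pi.algebraMap_apply,
      Algebra.algebraMap_self, RingHom.id_apply, star_mul', star_pow, star_sub, star_div₀,
      star_one, star_ofNat, Complex.star_def, Complex.conj_ofReal]
    push_cast
    rw [← pow_mul]
    ring

end Theta

theorem support_in_semialgebraic_iff_positivity_general (n m : ℕ)
    (p : Fin m → (NNVec n → ℝ)) (hp : ∀ k, IsRealFracPoly (p k))
    (L : (NNVec n → ℂ) →ₗ[ℂ] ℂ)
    (μ : Measure (NNVec n))
    (hint : ∀ f ∈ RAlg n m p, Integrable f μ)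
    (hrep : ∀ f ∈ RAlg n m p, L f = ∫ t, f t ∂μ) :
    (∀ k : Fin m, ∀ r ∈ RAlg n m p,
        0 ≤ L ((fun t => ((p k t : ℝ) : ℂ)) * r * star r)) ↔
    (∀ k : Fin m, μ {t : NNVec n | p k t < 0} = 0) := by
  have hintℝ (g : NNVec n → ℝ) (hg : (fun t => (g t : ℂ)) ∈ RAlg n m p) : Integrable g μ := by
    simpa using (hint _ hg).re
  have hrepℝ (g : NNVec n → ℝ) (hg : (fun t => (g t : ℂ)) ∈ RAlg n m p) :
      L (fun t => (g t : ℂ)) = ((∫ t, g t ∂μ : ℝ) : ℂ) :=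
    (hrep _ hg).trans integral_ofReal
  have hmul_star_mem (k : Fin m) {r : NNVec n → ℂ} (hr : r ∈ RAlg n m p) :
      (fun t => ((p k t : ℝ) : ℂ)) * r * star r ∈ RAlg n m p :=
    mul_mem (mul_mem (ofReal_mem_RAlg (hp k)) hr) (star_mem_RAlg hr)
  constructor
  · intro hL k
    choose r hr hr_eq using exists_mem_RAlg_mul_mul_star_eq hp k
    have hmem (j : ℕ) := hr_eq j ▸ hmul_star_mem k (hr j)
    have hsets : {t | p k t < 0} = {t | p k t * thetaFn p t < 0} :=
      Set.ext fun t => ⟨fun h => mul_neg_of_neg_of_pos h (thetaFn_pos t),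
        fun h => neg_of_mul_neg_left h (thetaFn_pos t).le⟩
    have hmeas (l : Fin m) : Measurable (p l) := (hp l).continuous.measurable
    rw [hsets]
    refine measure_setOf_neg_eq_zero_of_integral_nonneg ((hmeas k).mul (measurable_thetaFn hmeas))
      (by norm_num) (mul_thetaFn_le_half k) (hintℝ _ ofReal_thetaFn_mem_RAlg) thetaFn_pos
      (fun j => hintℝ _ (hmem j)) fun j => ?_
    have hLj := hL k (r j) (hr j)
    rwa [hr_eq j, hrepℝ _ (hmem j), Complex.zero_le_real] at hLj
  · intro hμ k r hr
    have hmem := hmul_star_mem k hr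
    rw [ofReal_comp_mul_mul_star] at hmem ⊢
    rw [hrepℝ _ hmem, Complex.zero_le_real]
    have hpk : ∀ᵐ t ∂μ, 0 ≤ p k t := by simpa [ae_iff] using hμ k
    exact integral_nonneg_of_ae <| by
      filter_upwards [hpk] with t ht using mul_nonneg ht (Complex.normSq_nonneg _)

/-- Let `L` be a positive semi-definite linear functional on the algebra `R`
generated by the fractional polynomials `Qₙ` and `θ(t) = (1 + Σⱼ tⱼ² + Σₖ pₖ(t)²)⁻¹`, where
`p₁, …, p_m ∈ Qₙ` are real, and let `μ` be a positive Borel measure on `[0,∞)ⁿ` representing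
`L`, i.e. `L(r) = ∫ r dμ` for all `r ∈ R`.  Then `L(pₖ·|r|²) ≥ 0` for all `r ∈ R` and all
`k` if and only if the support of `μ` is contained in `⋂ₖ pₖ⁻¹([0,∞))` (equivalently,
`μ({pₖ < 0}) = 0` for each `k`). -/
theorem support_in_semialgebraic_iff_positivity (n m : ℕ)
    (p : Fin m → (NNVec n → ℝ)) (hp : ∀ k, IsRealFracPoly (p k))
    (L : (NNVec n → ℂ) →ₗ[ℂ] ℂ)
    (hLpos : ∀ f ∈ RAlg n m p, 0 ≤ L (f * star f))
    (μ : Measure (NNVec n))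
    (hint : ∀ f ∈ RAlg n m p, Integrable f μ)
    (hrep : ∀ f ∈ RAlg n m p, L f = ∫ t, f t ∂μ) :
    (∀ k : Fin m, ∀ r ∈ RAlg n m p,
        0 ≤ L ((fun t => ((p k t : ℝ) : ℂ)) * r * star r)) ↔
    (∀ k : Fin m, μ {t : NNVec n | p k t < 0} = 0) :=
  support_in_semialgebraic_iff_positivity_general n m p hp L μ hint hrep
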